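/- For a bijection σ : X → X of a set X and functions β, β′ : X → G into a group G, if X is a single σ-orbit of finite cardinality n (i.e., X = {x, σx, …, σ^{n-1}x} with σ^n x = x), then β and β′ are right-cohomologous (∃ c : X → G, β′(y) = c(σy)·β(y)·c(y)⁻¹ for all y) if and only if the products β′(σ^{n-1}x)···β′(σx)·β′(x) and β(σ^{n-1}x)···β(σx)·β(x) are conjugate in G. -/
import Mathlib

private lemma prod_range_succ_rev {G : Type*} [Monoid G] (f : ℕ → G) (k : ℕ) :
    ((List.range (k+1)).reverse.map f).prod = f k * ((List.range k).reverse.map f).prod := by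
  rw [List.range_succ]
  simp

/-- On a single finite orbit of cardinality `n`, two cocycles are right-cohomologous iff
their ordered products around the orbit are conjugate. -/
theorem stmt_5 {G X : Type*} [Group G] (σ : X → X) (x : X) (n : ℕ) (hn : 0 < n)
    (hper : σ^[n] x = x)
    (horb : ∀ y : X, ∃ i, i < n ∧ σ^[i] x = y)
    (hinj : ∀ i j, i < n → j < n → σ^[i] x = σ^[j] x → i = j)
    (β β' : X → G) :
    (∃ c : X → G, ∀ y, β' y = c (σ y) * β y * (c y)⁻¹) ↔
      IsConj (((List.range n).reverse.map (fun i => β' (σ^[i] x))).prod)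
             (((List.range n).reverse.map (fun i => β (σ^[i] x))).prod) := by
  classical
  constructor
  · rintro ⟨c, hc⟩
    have key : ∀ k, ((List.range k).reverse.map (fun i => β' (σ^[i] x))).prod
        = c (σ^[k] x) * ((List.range k).reverse.map (fun i => β (σ^[i] x))).prod * (c x)⁻¹ := by
      intro k
      induction k with
      | zero => simp
      | succ k ih =>
        rw [prod_range_succ_rev, prod_range_succ_rev, ih, hc (σ^[k] x),
          Function.iterate_succ_apply' σ k x]
        group
    have hk := key n
    rw [hper] at hk
    rw [isConj_iff]
    exact ⟨(c x)⁻¹, by rw [hk]; group⟩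
  · intro hconj
    rw [isConj_iff] at hconj
    obtain ⟨g, hg⟩ := hconj
    choose idx h1 h2 using horb
    refine ⟨fun y => ((List.range (idx y)).reverse.map (fun i => β' (σ^[i] x))).prod * g⁻¹ *
      (((List.range (idx y)).reverse.map (fun i => β (σ^[i] x))).prod)⁻¹, ?_⟩
    intro y
    have hy : σ^[idx y] x = y := h2 y
    have hsy : σ^[idx y + 1] x = σ y := by
      rw [Function.iterate_succ_apply' σ, hy]
    by_cases hcase : idx y + 1 < n
    · have hiy : idx (σ y) = idx y + 1 :=
        hinj _ _ (h1 (σ y)) hcase (by rw [h2 (σ y), ← hsy])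
      simp only [hiy]
      rw [prod_range_succ_rev, prod_range_succ_rev, hy]
      group
    · have hn1 : idx y + 1 = n := by have := h1 y; omega
      have hx : σ y = x := by rw [← hsy, hn1, hper]
      have hidx0 : idx (σ y) = 0 :=
        hinj _ _ (h1 (σ y)) hn (by rw [h2 (σ y), hx, Function.iterate_zero_apply])
      simp only [hidx0, List.range_zero, List.reverse_nil, List.map_nil, List.prod_nil]
      rw [← hn1, prod_range_succ_rev, prod_range_succ_rev, hy] at hg
      set Pa := ((List.range (idx y)).reverse.map (fun i => β' (σ^[i] x))).prod with hPa
      set Pb := ((List.range (idx y)).reverse.map (fun i => β (σ^[i] x))).prod with hPb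
      have key : β' y = g⁻¹ * (β y * Pb) * g * Pa⁻¹ := by
        calc β' y = g⁻¹ * (g * (β' y * Pa) * g⁻¹) * g * Pa⁻¹ := by group
        _ = g⁻¹ * (β y * Pb) * g * Pa⁻¹ := by rw [hg]
      rw [key]; group
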